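/- For all a, b, c in the real unit interval [0,1], (a ⇒ b) ⇒ c = max( min(((a ⇒ b) ⇒ b), (b ⇒ c)), c ), where ⇒ denotes the Gödel implication. -/
import Mathlib


noncomputable def godelImp (a b : ℝ) : ℝ := if a ≤ b then 1 else b

theorem godel_imp_decomposition (a b c : ℝ)
    (ha : a ∈ Set.Icc (0:ℝ) 1) (hb : b ∈ Set.Icc (0:ℝ) 1) (hc : c ∈ Set.Icc (0:ℝ) 1) :
    godelImp (godelImp a b) c =
      max (min (godelImp (godelImp a b) b) (godelImp b c)) c := by
  obtain ⟨ha0, ha1⟩ := ha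
  obtain ⟨hb0, hb1⟩ := hb
  obtain ⟨hc0, hc1⟩ := hc
  unfold godelImp
  split_ifs <;> simp_all <;> linarith
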